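/- arXiv:2309.15257 — 2 statements merged into one kernel-verified Lean document; each statement's English description precedes it below -/
import Mathlib

section
/- For any fixed policy π, the map c : ℛ → ℛ defined by c(R)(s,a,s') = E_{S'~τ(s,a)}[R(s,a,S') − V^π_R(s) + γ·V^π_R(S')], where V^π_R is the value function of R under π, is a canonicalisation function: it is linear, c(R) and R differ by potential shaping and S'-redistribution for every R, and c(R1) = c(R2) if and only if R1 and R2 differ by potential shaping and S'-redistribution. -/
namespace RewardPaper

/-- A probability distribution on a finite type, represented as a function. -/
def IsDist {X : Type*} [Fintype X] (p : X → ℝ) : Prop :=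
  (∀ x, 0 ≤ p x) ∧ (∑ x, p x) = 1

/-- Reward functions on `S × A × S`. -/
abbrev Reward (S A : Type*) := S → A → S → ℝ

/-- A policy assigns to each state a probability distribution over actions. -/
def IsPolicy {S A : Type*} [Fintype A] (π : S → A → ℝ) : Prop := ∀ s, IsDist (π s)

/-- The type of policies. -/
abbrev Policy (S A : Type*) [Fintype A] := {π : S → A → ℝ // IsPolicy π}

/-- The distribution over states at time `t` of the Markov chain induced by
`τ`, `μ0` and the policy `π`. -/
noncomputable def stateDist {S A : Type*} [Fintype S] [Fintype A]
    (τ : S → A → S → ℝ) (μ0 : S → ℝ) (π : S → A → ℝ) : ℕ → S → ℝ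
  | 0 => μ0
  | (t + 1) => fun s' => ∑ s, ∑ a, stateDist τ μ0 π t s * π s a * τ s a s'

/-- Policy evaluation function `J_R(π)`: expected discounted return of `π` under `R`. -/
noncomputable def J {S A : Type*} [Fintype S] [Fintype A]
    (τ : S → A → S → ℝ) (μ0 : S → ℝ) (γ : ℝ) (R : Reward S A)
    (π : S → A → ℝ) : ℝ :=
  ∑' t : ℕ, γ ^ t * ∑ s, ∑ a, ∑ s', stateDist τ μ0 π t s * π s a * τ s a s' * R s a s'

/-- The value function `V^π_R(s)`: expected discounted return starting from `s`. -/
noncomputable def V {S A : Type*} [Fintype S] [Fintype A] [DecidableEq S]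
    (τ : S → A → S → ℝ) (γ : ℝ) (R : Reward S A) (π : S → A → ℝ) (s : S) : ℝ :=
  J τ (fun s0 => if s0 = s then 1 else 0) γ R π

/-- Every state is reachable with positive probability under `τ` from `μ0`. -/
def AllReachable {S A : Type*} [Fintype S] [Fintype A]
    (τ : S → A → S → ℝ) (μ0 : S → ℝ) : Prop :=
  ∀ s, ∃ (π : S → A → ℝ) (t : ℕ), IsPolicy π ∧ 0 < stateDist τ μ0 π t s

/-- `R2` is produced by potential shaping of `R1`. -/
def PotentialShaping {S A : Type*} (γ : ℝ) (R1 R2 : Reward S A) : Prop :=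
  ∃ Φ : S → ℝ, ∀ s a s', R2 s a s' = R1 s a s' + γ * Φ s' - Φ s

/-- `R1` and `R2` differ by S'-redistribution with respect to `τ`. -/
def SRedist {S A : Type*} [Fintype S] (τ : S → A → S → ℝ) (R1 R2 : Reward S A) : Prop :=
  ∀ s a, (∑ s', τ s a s' * R1 s a s') = (∑ s', τ s a s' * R2 s a s')

/-- `R1` and `R2` differ by (a composition of) potential shaping and S'-redistribution. -/
def DifferBy {S A : Type*} [Fintype S] (γ : ℝ) (τ : S → A → S → ℝ)
    (R1 R2 : Reward S A) : Prop :=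
  ∃ R' : Reward S A, PotentialShaping γ R1 R' ∧ SRedist τ R' R2

/-- A canonicalisation function. -/
def IsCanon {S A : Type*} [Fintype S] (γ : ℝ) (τ : S → A → S → ℝ)
    (c : Reward S A → Reward S A) : Prop :=
  IsLinearMap ℝ c ∧ (∀ R, DifferBy γ τ R (c R)) ∧
    ∀ R1 R2, c R1 = c R2 ↔ DifferBy γ τ R1 R2

/-- `n` is a norm on the subset `X` of reward space. -/
def IsNormOn {S A : Type*} (X : Set (Reward S A)) (n : Reward S A → ℝ) : Prop :=
  (∀ x ∈ X, 0 ≤ n x) ∧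
  (∀ x ∈ X, (n x = 0 ↔ x = 0)) ∧
  (∀ x ∈ X, ∀ r : ℝ, n (r • x) = |r| * n x) ∧
  (∀ x ∈ X, ∀ y ∈ X, n (x + y) ≤ n x + n y)

/-- `p` is a norm on all of reward space. -/
def IsNorm {S A : Type*} (p : Reward S A → ℝ) : Prop := IsNormOn Set.univ p

/-- `m` is a metric on the subset `X` of reward space. -/
def IsMetricOn {S A : Type*} (X : Set (Reward S A)) (m : Reward S A → Reward S A → ℝ) : Prop :=
  (∀ x ∈ X, m x x = 0) ∧ (∀ x ∈ X, ∀ y ∈ X, 0 ≤ m x y) ∧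
  (∀ x ∈ X, ∀ y ∈ X, m x y = m y x) ∧
  (∀ x ∈ X, ∀ y ∈ X, ∀ z ∈ X, m x z ≤ m x y + m y z)

/-- `m` is an admissible metric on `X`: a metric bilipschitz equivalent to some norm. -/
def IsAdmissibleOn {S A : Type*} (X : Set (Reward S A))
    (m : Reward S A → Reward S A → ℝ) : Prop :=
  IsMetricOn X m ∧
  ∃ (p : Reward S A → ℝ) (l u : ℝ), IsNorm p ∧ 0 < l ∧ 0 < u ∧
    ∀ x ∈ X, ∀ y ∈ X, l * p (x - y) ≤ m x y ∧ m x y ≤ u * p (x - y)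

/-- `d` is a STARC metric. -/
def IsSTARC {S A : Type*} [Fintype S] (γ : ℝ) (τ : S → A → S → ℝ)
    (d : Reward S A → Reward S A → ℝ) : Prop :=
  ∃ (c : Reward S A → Reward S A) (n : Reward S A → ℝ)
    (m : Reward S A → Reward S A → ℝ) (s : Reward S A → Reward S A),
    IsCanon γ τ c ∧ IsNormOn (Set.range c) n ∧
    (∀ R, (n (c R) = 0 → s R = c R) ∧ (n (c R) ≠ 0 → s R = (n (c R))⁻¹ • c R)) ∧
    IsAdmissibleOn (Set.range s) m ∧
    ∀ R1 R2, d R1 R2 = m (s R1) (s R2)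

/-- An EPIC-like canonicalisation function: standardises potential shaping only. -/
def IsEpicLikeCanon {S A : Type*} (γ : ℝ) (c : Reward S A → Reward S A) : Prop :=
  IsLinearMap ℝ c ∧ (∀ R, PotentialShaping γ R (c R)) ∧
    ∀ R1 R2, c R1 = c R2 ↔ PotentialShaping γ R1 R2

/-- `d` is an EPIC-like metric. -/
def IsEpicLike {S A : Type*} (γ : ℝ) (d : Reward S A → Reward S A → ℝ) : Prop :=
  ∃ (c : Reward S A → Reward S A) (n : Reward S A → ℝ)
    (m : Reward S A → Reward S A → ℝ) (s : Reward S A → Reward S A),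
    IsEpicLikeCanon γ c ∧ IsNormOn (Set.range c) n ∧
    (∀ R, (n (c R) = 0 → s R = c R) ∧ (n (c R) ≠ 0 → s R = (n (c R))⁻¹ • c R)) ∧
    IsAdmissibleOn (Set.range c) m ∧
    ∀ R1 R2, d R1 R2 = m (s R1) (s R2)

/-- The maximal value of `J_R` over all policies. -/
noncomputable def maxJ {S A : Type*} [Fintype S] [Fintype A]
    (τ : S → A → S → ℝ) (μ0 : S → ℝ) (γ : ℝ) (R : Reward S A) : ℝ :=
  ⨆ π : Policy S A, J τ μ0 γ R π.1

/-- The minimal value of `J_R` over all policies. -/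
noncomputable def minJ {S A : Type*} [Fintype S] [Fintype A]
    (τ : S → A → S → ℝ) (μ0 : S → ℝ) (γ : ℝ) (R : Reward S A) : ℝ :=
  ⨅ π : Policy S A, J τ μ0 γ R π.1

/-- `R1` and `R2` induce the same ordering of policies. -/
def SameOrder {S A : Type*} [Fintype S] [Fintype A]
    (τ : S → A → S → ℝ) (μ0 : S → ℝ) (γ : ℝ) (R1 R2 : Reward S A) : Prop :=
  ∀ π π' : Policy S A,
    (J τ μ0 γ R1 π.1 ≤ J τ μ0 γ R1 π'.1 ↔ J τ μ0 γ R2 π.1 ≤ J τ μ0 γ R2 π'.1)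

/-- Soundness of a pseudometric on reward space. -/
def Sound {S A : Type*} [Fintype S] [Fintype A]
    (τ : S → A → S → ℝ) (μ0 : S → ℝ) (γ : ℝ)
    (d : Reward S A → Reward S A → ℝ) : Prop :=
  ∃ U : ℝ, 0 < U ∧ ∀ (R1 R2 : Reward S A) (π1 π2 : Policy S A),
    J τ μ0 γ R2 π1.1 ≤ J τ μ0 γ R2 π2.1 →
    J τ μ0 γ R1 π1.1 - J τ μ0 γ R1 π2.1 ≤
      U * (maxJ τ μ0 γ R1 - minJ τ μ0 γ R1) * d R1 R2

/-- Completeness of a pseudometric on reward space. -/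
def Complete {S A : Type*} [Fintype S] [Fintype A]
    (τ : S → A → S → ℝ) (μ0 : S → ℝ) (γ : ℝ)
    (d : Reward S A → Reward S A → ℝ) : Prop :=
  (∃ L : ℝ, 0 < L ∧ ∀ R1 R2 : Reward S A, ∃ π1 π2 : Policy S A,
    J τ μ0 γ R2 π1.1 ≤ J τ μ0 γ R2 π2.1 ∧
    L * (maxJ τ μ0 γ R1 - minJ τ μ0 γ R1) * d R1 R2 ≤
      J τ μ0 γ R1 π1.1 - J τ μ0 γ R1 π2.1) ∧
  ∀ R1 R2 : Reward S A, SameOrder τ μ0 γ R1 R2 → d R1 R2 = 0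

/-- `d` is a pseudometric on reward space. -/
def IsPseudometric {S A : Type*} (d : Reward S A → Reward S A → ℝ) : Prop :=
  (∀ x, d x x = 0) ∧ (∀ x y, 0 ≤ d x y) ∧ (∀ x y, d x y = d y x) ∧
    ∀ x y z, d x z ≤ d x y + d y z

/-- The EPIC canonicalisation. -/
noncomputable def CEpic {S A : Type*} [Fintype S] [Fintype A]
    (DS : S → ℝ) (DA : A → ℝ) (γ : ℝ) (R : Reward S A) : Reward S A :=
  fun s a s' =>
    R s a s'
      + γ * (∑ a', ∑ σ', DA a' * DS σ' * R s' a' σ')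
      - (∑ a', ∑ σ', DA a' * DS σ' * R s a' σ')
      - γ * (∑ σ, ∑ a', ∑ σ', DS σ * DA a' * DS σ' * R σ a' σ')

/-- Mean of `f(S,A,S')` with `S,S' ~ DS` and `A ~ DA` independent. -/
noncomputable def meanD {S A : Type*} [Fintype S] [Fintype A]
    (DS : S → ℝ) (DA : A → ℝ) (f : Reward S A) : ℝ :=
  ∑ s, ∑ a, ∑ s', DS s * DA a * DS s' * f s a s'

/-- Covariance of `f(S,A,S')` and `g(S,A,S')`. -/
noncomputable def covD {S A : Type*} [Fintype S] [Fintype A]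
    (DS : S → ℝ) (DA : A → ℝ) (f g : Reward S A) : ℝ :=
  ∑ s, ∑ a, ∑ s', DS s * DA a * DS s' *
    (f s a s' - meanD DS DA f) * (g s a s' - meanD DS DA g)

/-- Variance of `f(S,A,S')`. -/
noncomputable def varD {S A : Type*} [Fintype S] [Fintype A]
    (DS : S → ℝ) (DA : A → ℝ) (f : Reward S A) : ℝ :=
  covD DS DA f f

/-- Pearson correlation of `f(S,A,S')` and `g(S,A,S')`. -/
noncomputable def pearsonD {S A : Type*} [Fintype S] [Fintype A]
    (DS : S → ℝ) (DA : A → ℝ) (f g : Reward S A) : ℝ :=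
  covD DS DA f g / (Real.sqrt (varD DS DA f) * Real.sqrt (varD DS DA g))

/-- The EPIC distance. -/
noncomputable def DEpic {S A : Type*} [Fintype S] [Fintype A]
    (DS : S → ℝ) (DA : A → ℝ) (γ : ℝ) (R1 R2 : Reward S A) : ℝ :=
  Real.sqrt ((1 - pearsonD DS DA (CEpic DS DA γ R1) (CEpic DS DA γ R2)) / 2)

/-- The DARD canonicalisation. -/
noncomputable def CDard {S A : Type*} [Fintype S] [Fintype A]
    (τ : S → A → S → ℝ) (DA : A → ℝ) (γ : ℝ) (R : Reward S A) : Reward S A :=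
  fun s a s' =>
    R s a s' + ∑ a', DA a' *
      (γ * (∑ σ'', τ s' a' σ'' * R s' a' σ'')
        - (∑ σ', τ s a' σ' * R s a' σ')
        - γ * (∑ σ', ∑ σ'', τ s a' σ' * τ s' a' σ'' * R σ' a' σ''))

/-- The DARD distance. -/
noncomputable def DDard {S A : Type*} [Fintype S] [Fintype A]
    (τ : S → A → S → ℝ) (DS : S → ℝ) (DA : A → ℝ) (γ : ℝ) (R1 R2 : Reward S A) : ℝ :=
  Real.sqrt ((1 - pearsonD DS DA (CDard τ DA γ R1) (CDard τ DA γ R2)) / 2)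

/-- The (unweighted) L2 norm on reward space. -/
noncomputable def l2Norm {S A : Type*} [Fintype S] [Fintype A] (R : Reward S A) : ℝ :=
  Real.sqrt (∑ s, ∑ a, ∑ s', (R s a s') ^ 2)

/-- A weighted L2 norm on reward space. -/
noncomputable def weightedL2 {S A : Type*} [Fintype S] [Fintype A]
    (w : S → A → S → ℝ) (R : Reward S A) : ℝ :=
  Real.sqrt (∑ s, ∑ a, ∑ s', w s a s' * (R s a s') ^ 2)

/-- The L2 norm weighted by the product distribution `DS ⊗ DA ⊗ DS`. -/
noncomputable def l2NormD {S A : Type*} [Fintype S] [Fintype A]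
    (DS : S → ℝ) (DA : A → ℝ) (R : Reward S A) : ℝ :=
  Real.sqrt (∑ s, ∑ a, ∑ s', DS s * DA a * DS s' * (R s a s') ^ 2)

/-- Expected discounted return of a reward function along a sequence of per-timestep
transition distributions. -/
noncomputable def Eret {S A : Type*} [Fintype S] [Fintype A]
    (γ : ℝ) (R : Reward S A) (p : ℕ → (S × A × S) → ℝ) : ℝ :=
  ∑' t : ℕ, γ ^ t * ∑ x : S × A × S, p t x * R x.1 x.2.1 x.2.2

section Helpers

variable {S A : Type*} [Fintype S] [Fintype A]

lemma stateDist_nonneg {τ : S → A → S → ℝ} (hτ : ∀ s a, IsDist (τ s a))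
    {μ0 : S → ℝ} (hμ0 : IsDist μ0) {π : S → A → ℝ} (hπ : IsPolicy π) (t : ℕ) (s : S) :
    0 ≤ stateDist τ μ0 π t s := by
  induction t generalizing s with
  | zero => exact hμ0.1 s
  | succ t ih =>
    refine Finset.sum_nonneg fun x _ => Finset.sum_nonneg fun a _ => ?_
    exact mul_nonneg (mul_nonneg (ih x) ((hπ x).1 a)) ((hτ x a).1 s)

lemma stateDist_sum_one {τ : S → A → S → ℝ} (hτ : ∀ s a, IsDist (τ s a))
    {μ0 : S → ℝ} (hμ0 : IsDist μ0) {π : S → A → ℝ} (hπ : IsPolicy π) (t : ℕ) :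
    ∑ s, stateDist τ μ0 π t s = 1 := by
  induction t with
  | zero => exact hμ0.2
  | succ t ih =>
    show ∑ s' : S, ∑ s, ∑ a, stateDist τ μ0 π t s * π s a * τ s a s' = 1
    rw [Finset.sum_comm]
    calc ∑ s, ∑ s' : S, ∑ a, stateDist τ μ0 π t s * π s a * τ s a s'
        = ∑ s, stateDist τ μ0 π t s := by
          refine Finset.sum_congr rfl fun s _ => ?_
          rw [Finset.sum_comm]
          calc ∑ a, ∑ s' : S, stateDist τ μ0 π t s * π s a * τ s a s'
              = ∑ a, stateDist τ μ0 π t s * π s a := by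
                refine Finset.sum_congr rfl fun a _ => ?_
                rw [← Finset.mul_sum, (hτ s a).2, mul_one]
            _ = stateDist τ μ0 π t s := by
                rw [← Finset.mul_sum, (hπ s).2, mul_one]
      _ = 1 := ih

lemma stateDist_le_one {τ : S → A → S → ℝ} (hτ : ∀ s a, IsDist (τ s a))
    {μ0 : S → ℝ} (hμ0 : IsDist μ0) {π : S → A → ℝ} (hπ : IsPolicy π) (t : ℕ) (s : S) :
    stateDist τ μ0 π t s ≤ 1 := by
  rw [← stateDist_sum_one hτ hμ0 hπ t]
  exact Finset.single_le_sum (fun x _ => stateDist_nonneg hτ hμ0 hπ t x) (Finset.mem_univ s)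

lemma dist_le_one {X : Type*} [Fintype X] {p : X → ℝ} (hp : IsDist p) (x : X) : p x ≤ 1 := by
  rw [← hp.2]
  exact Finset.single_le_sum (fun y _ => hp.1 y) (Finset.mem_univ x)

/-- Bound on the per-timestep expected reward. -/
lemma abs_tripleSum_le {τ : S → A → S → ℝ} (hτ : ∀ s a, IsDist (τ s a))
    {μ0 : S → ℝ} (hμ0 : IsDist μ0) {π : S → A → ℝ} (hπ : IsPolicy π)
    (R : Reward S A) (t : ℕ) :
    |∑ s, ∑ a, ∑ s', stateDist τ μ0 π t s * π s a * τ s a s' * R s a s'| ≤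
      ∑ s, ∑ a, ∑ s', |R s a s'| := by
  calc |∑ s, ∑ a, ∑ s', stateDist τ μ0 π t s * π s a * τ s a s' * R s a s'|
      ≤ ∑ s, ∑ a, ∑ s', |stateDist τ μ0 π t s * π s a * τ s a s' * R s a s'| := by
        refine (Finset.abs_sum_le_sum_abs _ _).trans (Finset.sum_le_sum fun s _ => ?_)
        refine (Finset.abs_sum_le_sum_abs _ _).trans (Finset.sum_le_sum fun a _ => ?_)
        exact Finset.abs_sum_le_sum_abs _ _
    _ ≤ ∑ s, ∑ a, ∑ s', |R s a s'| := by
        refine Finset.sum_le_sum fun s _ => Finset.sum_le_sum fun a _ =>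
          Finset.sum_le_sum fun s' _ => ?_
        have h1 : 0 ≤ stateDist τ μ0 π t s := stateDist_nonneg hτ hμ0 hπ t s
        have h2 : 0 ≤ π s a := (hπ s).1 a
        have h3 : 0 ≤ τ s a s' := (hτ s a).1 s'
        have hw : stateDist τ μ0 π t s * π s a * τ s a s' ≤ 1 := by
          calc stateDist τ μ0 π t s * π s a * τ s a s'
              ≤ 1 * 1 * 1 := by
                gcongr
                · exact stateDist_le_one hτ hμ0 hπ t s
                · exact dist_le_one (hπ s) a
                · exact dist_le_one (hτ s a) s'
            _ = 1 := by ring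
        rw [abs_mul, abs_of_nonneg (mul_nonneg (mul_nonneg h1 h2) h3)]
        nlinarith [abs_nonneg (R s a s')]

lemma summable_Jterm {τ : S → A → S → ℝ} (hτ : ∀ s a, IsDist (τ s a))
    {μ0 : S → ℝ} (hμ0 : IsDist μ0) {π : S → A → ℝ} (hπ : IsPolicy π)
    {γ : ℝ} (hγ : γ ∈ Set.Ioo (0 : ℝ) 1) (R : Reward S A) :
    Summable (fun t : ℕ =>
      γ ^ t * ∑ s, ∑ a, ∑ s', stateDist τ μ0 π t s * π s a * τ s a s' * R s a s') := by
  rw [← summable_abs_iff]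
  refine Summable.of_nonneg_of_le (fun t => abs_nonneg _)
    (fun t => ?_) (((summable_geometric_of_lt_one hγ.1.le hγ.2).mul_left
      (∑ s, ∑ a, ∑ s', |R s a s'|)))
  rw [abs_mul, abs_pow, abs_of_nonneg hγ.1.le, mul_comm]
  exact mul_le_mul_of_nonneg_right (abs_tripleSum_le hτ hμ0 hπ R t) (pow_nonneg hγ.1.le t)

lemma J_add {τ : S → A → S → ℝ} (hτ : ∀ s a, IsDist (τ s a))
    {μ0 : S → ℝ} (hμ0 : IsDist μ0) {π : S → A → ℝ} (hπ : IsPolicy π)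
    {γ : ℝ} (hγ : γ ∈ Set.Ioo (0 : ℝ) 1) (R1 R2 : Reward S A) :
    J τ μ0 γ (fun s a s' => R1 s a s' + R2 s a s') π = J τ μ0 γ R1 π + J τ μ0 γ R2 π := by
  unfold J
  rw [← Summable.tsum_add (summable_Jterm hτ hμ0 hπ hγ R1) (summable_Jterm hτ hμ0 hπ hγ R2)]
  refine tsum_congr fun t => ?_
  rw [← mul_add, ← Finset.sum_add_distrib]
  congr 1
  refine Finset.sum_congr rfl fun s _ => ?_
  rw [← Finset.sum_add_distrib]
  refine Finset.sum_congr rfl fun a _ => ?_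
  rw [← Finset.sum_add_distrib]
  refine Finset.sum_congr rfl fun s' _ => ?_
  ring

lemma J_smul {τ : S → A → S → ℝ} (μ0 : S → ℝ) (π : S → A → ℝ)
    (γ : ℝ) (r : ℝ) (R : Reward S A) :
    J τ μ0 γ (fun s a s' => r * R s a s') π = r * J τ μ0 γ R π := by
  unfold J
  rw [← tsum_mul_left]
  refine tsum_congr fun t => ?_
  have h : ∀ s a s', stateDist τ μ0 π t s * π s a * τ s a s' * (r * R s a s')
      = r * (stateDist τ μ0 π t s * π s a * τ s a s' * R s a s') := fun s a s' => by ring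
  simp only [h, ← Finset.mul_sum]
  ring

/-- J depends on R only through the conditional expectations over s'. -/
lemma J_congr_sredist {τ : S → A → S → ℝ} (μ0 : S → ℝ) (π : S → A → ℝ) (γ : ℝ)
    {R1 R2 : Reward S A}
    (h : ∀ s a, (∑ s', τ s a s' * R1 s a s') = (∑ s', τ s a s' * R2 s a s')) :
    J τ μ0 γ R1 π = J τ μ0 γ R2 π := by
  unfold J
  refine tsum_congr fun t => ?_
  congr 1
  refine Finset.sum_congr rfl fun s _ => Finset.sum_congr rfl fun a _ => ?_
  have : ∀ R : Reward S A, ∑ s', stateDist τ μ0 π t s * π s a * τ s a s' * R s a s' =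
      stateDist τ μ0 π t s * π s a * ∑ s', τ s a s' * R s a s' := by
    intro R
    rw [Finset.mul_sum]
    exact Finset.sum_congr rfl fun s' _ => by ring
  rw [this R1, this R2, h s a]

/-- Telescoping: the return of a pure potential-shaping term. -/
lemma J_shape {τ : S → A → S → ℝ} (hτ : ∀ s a, IsDist (τ s a))
    {μ0 : S → ℝ} (hμ0 : IsDist μ0) {π : S → A → ℝ} (hπ : IsPolicy π)
    {γ : ℝ} (hγ : γ ∈ Set.Ioo (0 : ℝ) 1) (Φ : S → ℝ) :
    J τ μ0 γ (fun s _ s' => γ * Φ s' - Φ s) π = -∑ s, μ0 s * Φ s := by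
  set a : ℕ → ℝ := fun t => γ ^ t * ∑ s, stateDist τ μ0 π t s * Φ s with ha
  have hterm : ∀ t : ℕ,
      γ ^ t * ∑ s, ∑ b, ∑ s', stateDist τ μ0 π t s * π s b * τ s b s' *
        ((fun s _ s' => γ * Φ s' - Φ s) s b s') = a (t + 1) - a t := by
    intro t
    have e1 : ∑ s, ∑ b, ∑ s', stateDist τ μ0 π t s * π s b * τ s b s' * (γ * Φ s' - Φ s)
        = γ * (∑ s', stateDist τ μ0 π (t+1) s' * Φ s') - ∑ s, stateDist τ μ0 π t s * Φ s := by
      have hsplit : ∀ s b, ∑ s', stateDist τ μ0 π t s * π s b * τ s b s' * (γ * Φ s' - Φ s)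
          = γ * (∑ s', stateDist τ μ0 π t s * π s b * τ s b s' * Φ s')
            - stateDist τ μ0 π t s * π s b * Φ s := by
        intro s b
        rw [Finset.mul_sum]
        rw [show stateDist τ μ0 π t s * π s b * Φ s
            = (∑ s', τ s b s') * (stateDist τ μ0 π t s * π s b * Φ s) by
          rw [(hτ s b).2, one_mul]]
        rw [Finset.sum_mul, ← Finset.sum_sub_distrib]
        exact Finset.sum_congr rfl fun s' _ => by ring
      calc ∑ s, ∑ b, ∑ s', stateDist τ μ0 π t s * π s b * τ s b s' * (γ * Φ s' - Φ s)
          = ∑ s, ∑ b, (γ * (∑ s', stateDist τ μ0 π t s * π s b * τ s b s' * Φ s')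
            - stateDist τ μ0 π t s * π s b * Φ s) := by
            exact Finset.sum_congr rfl fun s _ => Finset.sum_congr rfl fun b _ => hsplit s b
        _ = γ * (∑ s, ∑ b, ∑ s', stateDist τ μ0 π t s * π s b * τ s b s' * Φ s')
            - ∑ s, ∑ b, stateDist τ μ0 π t s * π s b * Φ s := by
            rw [Finset.mul_sum, ← Finset.sum_sub_distrib]
            refine Finset.sum_congr rfl fun s _ => ?_
            rw [Finset.mul_sum, ← Finset.sum_sub_distrib]
        _ = γ * (∑ s', stateDist τ μ0 π (t+1) s' * Φ s')
            - ∑ s, stateDist τ μ0 π t s * Φ s := by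
            congr 1
            · congr 1
              have : ∀ s', stateDist τ μ0 π (t+1) s' * Φ s'
                  = ∑ s, ∑ b, stateDist τ μ0 π t s * π s b * τ s b s' * Φ s' := by
                intro s'
                show (∑ s, ∑ b, stateDist τ μ0 π t s * π s b * τ s b s') * Φ s' = _
                rw [Finset.sum_mul]
                exact Finset.sum_congr rfl fun s _ => by rw [Finset.sum_mul]
              rw [Finset.sum_congr rfl fun s' _ => this s']
              calc ∑ s, ∑ b, ∑ s', stateDist τ μ0 π t s * π s b * τ s b s' * Φ s'
                  = ∑ s, ∑ s', ∑ b, stateDist τ μ0 π t s * π s b * τ s b s' * Φ s' :=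
                    Finset.sum_congr rfl fun s _ => Finset.sum_comm
                _ = ∑ s', ∑ s, ∑ b, stateDist τ μ0 π t s * π s b * τ s b s' * Φ s' :=
                    Finset.sum_comm
            · refine Finset.sum_congr rfl fun s _ => ?_
              rw [show stateDist τ μ0 π t s * Φ s
                  = (∑ b, π s b) * (stateDist τ μ0 π t s * Φ s) by rw [(hπ s).2, one_mul],
                Finset.sum_mul]
              exact Finset.sum_congr rfl fun b _ => by ring
    rw [e1, ha]
    simp only []
    ring
  have hsum : Summable (fun t : ℕ =>
      γ ^ t * ∑ s, ∑ b, ∑ s', stateDist τ μ0 π t s * π s b * τ s b s' *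
        ((fun s _ s' => γ * Φ s' - Φ s) s b s')) :=
    summable_Jterm hτ hμ0 hπ hγ _
  have hlim : Filter.Tendsto a Filter.atTop (nhds 0) := by
    have hb : ∀ t, ‖a t‖ ≤ (∑ s, |Φ s|) * γ ^ t := by
      intro t
      rw [ha]
      simp only [Real.norm_eq_abs, abs_mul, abs_pow, abs_of_nonneg hγ.1.le]
      rw [mul_comm]
      refine mul_le_mul_of_nonneg_right ?_ (pow_nonneg hγ.1.le t)
      refine (Finset.abs_sum_le_sum_abs _ _).trans (Finset.sum_le_sum fun s _ => ?_)
      rw [abs_mul]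
      refine mul_le_of_le_one_left (abs_nonneg _) ?_
      rw [abs_of_nonneg (stateDist_nonneg hτ hμ0 hπ t s)]
      exact stateDist_le_one hτ hμ0 hπ t s
    refine squeeze_zero_norm hb ?_
    rw [show (0:ℝ) = (∑ s, |Φ s|) * 0 by ring]
    exact (tendsto_pow_atTop_nhds_zero_of_lt_one hγ.1.le hγ.2).const_mul _
  have hhas : HasSum (fun t : ℕ =>
      γ ^ t * ∑ s, ∑ b, ∑ s', stateDist τ μ0 π t s * π s b * τ s b s' *
        ((fun s _ s' => γ * Φ s' - Φ s) s b s')) (-a 0) := by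
    rw [hsum.hasSum_iff_tendsto_nat]
    have : ∀ n : ℕ, ∑ i ∈ Finset.range n,
        γ ^ i * ∑ s, ∑ b, ∑ s', stateDist τ μ0 π i s * π s b * τ s b s' *
          ((fun s _ s' => γ * Φ s' - Φ s) s b s') = a n - a 0 := by
      intro n
      rw [Finset.sum_congr rfl fun i _ => hterm i]
      exact Finset.sum_range_sub a n
    rw [funext this]
    have := hlim.sub_const (a 0)
    simpa using this
  have : J τ μ0 γ (fun s _ s' => γ * Φ s' - Φ s) π = -a 0 := hhas.tsum_eq
  rw [this, ha]
  simp [stateDist]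


lemma delta_isDist [DecidableEq S] (s : S) :
    IsDist (fun s0 : S => if s0 = s then (1:ℝ) else 0) := by
  constructor
  · intro x; dsimp; split <;> norm_num
  · simp

lemma delta_sum [DecidableEq S] (σ : S) (Φ : S → ℝ) :
    ∑ s0, (if s0 = σ then (1:ℝ) else 0) * Φ s0 = Φ σ := by
  simp

variable [DecidableEq S]

lemma V_add {τ : S → A → S → ℝ} (hτ : ∀ s a, IsDist (τ s a))
    {π : S → A → ℝ} (hπ : IsPolicy π) {γ : ℝ} (hγ : γ ∈ Set.Ioo (0 : ℝ) 1)
    (R1 R2 : Reward S A) (σ : S) :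
    V τ γ (R1 + R2) π σ = V τ γ R1 π σ + V τ γ R2 π σ :=
  J_add hτ (delta_isDist σ) hπ hγ R1 R2

lemma V_smul (τ : S → A → S → ℝ) (π : S → A → ℝ) (γ r : ℝ) (R : Reward S A) (σ : S) :
    V τ γ (r • R) π σ = r * V τ γ R π σ :=
  J_smul _ _ _ r R

lemma V_sredist (τ : S → A → S → ℝ) (π : S → A → ℝ) (γ : ℝ) {R1 R2 : Reward S A}
    (h : ∀ s a, (∑ s', τ s a s' * R1 s a s') = (∑ s', τ s a s' * R2 s a s')) (σ : S) :
    V τ γ R1 π σ = V τ γ R2 π σ :=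
  J_congr_sredist _ _ _ h

lemma V_shape {τ : S → A → S → ℝ} (hτ : ∀ s a, IsDist (τ s a))
    {π : S → A → ℝ} (hπ : IsPolicy π) {γ : ℝ} (hγ : γ ∈ Set.Ioo (0 : ℝ) 1)
    (R : Reward S A) (Φ : S → ℝ) (σ : S) :
    V τ γ (fun s a s' => R s a s' + (γ * Φ s' - Φ s)) π σ = V τ γ R π σ - Φ σ := by
  unfold V
  rw [J_add hτ (delta_isDist σ) hπ hγ R (fun s _ s' => γ * Φ s' - Φ s),
    J_shape hτ (delta_isDist σ) hπ hγ Φ, delta_sum]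
  ring

/-- Evaluate the VAL canonicalisation. -/
lemma c_eval {τ : S → A → S → ℝ} (hτ : ∀ s a, IsDist (τ s a))
    (γ : ℝ) (π : S → A → ℝ) (R : Reward S A) (s : S) (a : A) :
    ∑ σ, τ s a σ * (R s a σ - V τ γ R π s + γ * V τ γ R π σ)
      = (∑ σ, τ s a σ * R s a σ) - V τ γ R π s
        + γ * (∑ σ, τ s a σ * V τ γ R π σ) := by
  have e : ∀ σ, τ s a σ * (R s a σ - V τ γ R π s + γ * V τ γ R π σ)
      = τ s a σ * R s a σ - τ s a σ * V τ γ R π s + γ * (τ s a σ * V τ γ R π σ) :=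
    fun σ => by ring
  simp only [e, Finset.sum_add_distrib, Finset.sum_sub_distrib, ← Finset.mul_sum,
    ← Finset.sum_mul, (hτ s a).2, one_mul]

end Helpers

/-- Value-Adjusted Levelling is a canonicalisation function. -/
theorem val_is_canonicalisation
    {S A : Type*} [Fintype S] [Fintype A] [Nonempty S] [Nonempty A] [DecidableEq S]
    (τ : S → A → S → ℝ) (hτ : ∀ s a, IsDist (τ s a))
    (μ0 : S → ℝ) (hμ0 : IsDist μ0)
    (γ : ℝ) (hγ : γ ∈ Set.Ioo (0 : ℝ) 1)
    (hreach : AllReachable τ μ0)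
    (π : S → A → ℝ) (hπ : IsPolicy π) :
    IsCanon γ τ
      (fun R s a _ => ∑ σ, τ s a σ * (R s a σ - V τ γ R π s + γ * V τ γ R π σ)) := by
  refine ⟨?_, ?_, ?_⟩
  · -- linearity
    constructor
    · intro R1 R2
      funext s a s'
      have hV : ∀ σ, V τ γ (R1 + R2) π σ = V τ γ R1 π σ + V τ γ R2 π σ :=
        V_add hτ hπ hγ R1 R2
      have e : ∀ σ, τ s a σ * ((R1 + R2) s a σ - V τ γ (R1 + R2) π s
            + γ * V τ γ (R1 + R2) π σ)
          = τ s a σ * (R1 s a σ - V τ γ R1 π s + γ * V τ γ R1 π σ)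
            + τ s a σ * (R2 s a σ - V τ γ R2 π s + γ * V τ γ R2 π σ) := by
        intro σ
        rw [hV s, hV σ]
        show τ s a σ * (R1 s a σ + R2 s a σ - _ + _) = _
        ring
      show ∑ σ, τ s a σ * ((R1 + R2) s a σ - V τ γ (R1 + R2) π s
          + γ * V τ γ (R1 + R2) π σ) = _
      rw [Finset.sum_congr rfl fun σ _ => e σ, Finset.sum_add_distrib]
      rfl
    · intro r R
      funext s a s'
      have hV : ∀ σ, V τ γ (r • R) π σ = r * V τ γ R π σ := V_smul τ π γ r R
      have e : ∀ σ, τ s a σ * ((r • R) s a σ - V τ γ (r • R) π s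
            + γ * V τ γ (r • R) π σ)
          = r * (τ s a σ * (R s a σ - V τ γ R π s + γ * V τ γ R π σ)) := by
        intro σ
        rw [hV s, hV σ]
        show τ s a σ * (r * R s a σ - _ + _) = _
        ring
      show ∑ σ, τ s a σ * ((r • R) s a σ - V τ γ (r • R) π s
          + γ * V τ γ (r • R) π σ) = _
      rw [Finset.sum_congr rfl fun σ _ => e σ, ← Finset.mul_sum]
      rfl
  · -- R differs from c R by shaping + redistribution
    intro R
    refine ⟨fun s a s' => R s a s' + γ * V τ γ R π s' - V τ γ R π s,
      ⟨V τ γ R π, fun s a s' => rfl⟩, ?_⟩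
    intro s a
    show ∑ s', τ s a s' * (R s a s' + γ * V τ γ R π s' - V τ γ R π s)
        = ∑ s', τ s a s' *
            (∑ σ, τ s a σ * (R s a σ - V τ γ R π s + γ * V τ γ R π σ))
    rw [← Finset.sum_mul, (hτ s a).2, one_mul]
    exact Finset.sum_congr rfl fun σ _ => by ring
  · intro R1 R2
    constructor
    · intro hc
      refine ⟨fun s a s' => R1 s a s' + γ * (V τ γ R1 π s' - V τ γ R2 π s')
          - (V τ γ R1 π s - V τ γ R2 π s),
        ⟨fun σ => V τ γ R1 π σ - V τ γ R2 π σ, fun s a s' => rfl⟩, ?_⟩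
      intro s a
      obtain ⟨s0⟩ := (inferInstance : Nonempty S)
      have h := congrFun (congrFun (congrFun hc s) a) s0
      simp only [] at h
      rw [c_eval hτ γ π R1 s a, c_eval hτ γ π R2 s a] at h
      have hL : ∑ s', τ s a s' * (R1 s a s' + γ * (V τ γ R1 π s' - V τ γ R2 π s')
            - (V τ γ R1 π s - V τ γ R2 π s))
          = (∑ s', τ s a s' * R1 s a s')
            + γ * (∑ s', τ s a s' * V τ γ R1 π s')
            - γ * (∑ s', τ s a s' * V τ γ R2 π s')
            - (V τ γ R1 π s - V τ γ R2 π s) := by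
        have e : ∀ σ, τ s a σ * (R1 s a σ + γ * (V τ γ R1 π σ - V τ γ R2 π σ)
              - (V τ γ R1 π s - V τ γ R2 π s))
            = τ s a σ * R1 s a σ + γ * (τ s a σ * V τ γ R1 π σ)
              - γ * (τ s a σ * V τ γ R2 π σ)
              - τ s a σ * (V τ γ R1 π s - V τ γ R2 π s) := fun σ => by ring
        simp only [e, Finset.sum_add_distrib, Finset.sum_sub_distrib, ← Finset.mul_sum,
          ← Finset.sum_mul, (hτ s a).2, one_mul]
      show ∑ s', τ s a s' * (R1 s a s' + γ * (V τ γ R1 π s' - V τ γ R2 π s')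
          - (V τ γ R1 π s - V τ γ R2 π s)) = ∑ s', τ s a s' * R2 s a s'
      rw [hL]
      linarith [h]
    · rintro ⟨R', ⟨Φ, hΦ⟩, hred⟩
      funext s a s'
      show ∑ σ, τ s a σ * (R1 s a σ - V τ γ R1 π s + γ * V τ γ R1 π σ)
          = ∑ σ, τ s a σ * (R2 s a σ - V τ γ R2 π s + γ * V τ γ R2 π σ)
      have hR' : R' = fun s a s' => R1 s a s' + (γ * Φ s' - Φ s) := by
        funext s a s'; rw [hΦ s a s']; ring
      have hV2 : ∀ σ, V τ γ R2 π σ = V τ γ R1 π σ - Φ σ := by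
        intro σ
        rw [← V_sredist τ π γ hred σ, hR']
        exact V_shape hτ hπ hγ R1 Φ σ
      rw [c_eval hτ γ π R1 s a, c_eval hτ γ π R2 s a]
      have hE2 : ∑ σ, τ s a σ * R2 s a σ
          = (∑ σ, τ s a σ * R1 s a σ) + γ * (∑ σ, τ s a σ * Φ σ) - Φ s := by
        rw [← hred s a]
        have e : ∀ σ, τ s a σ * R' s a σ
            = τ s a σ * R1 s a σ + γ * (τ s a σ * Φ σ) - τ s a σ * Φ s := by
          intro σ; rw [hΦ s a σ]; ring
        simp only [e, Finset.sum_add_distrib, Finset.sum_sub_distrib, ← Finset.mul_sum,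
          ← Finset.sum_mul, (hτ s a).2, one_mul]
      have hT2 : ∑ σ, τ s a σ * V τ γ R2 π σ
          = (∑ σ, τ s a σ * V τ γ R1 π σ) - ∑ σ, τ s a σ * Φ σ := by
        rw [Finset.sum_congr rfl fun σ _ => by rw [hV2 σ, mul_sub], Finset.sum_sub_distrib]
      rw [hE2, hT2, hV2 s]
      ring


end RewardPaper
end

section
/- For any weighted L2-norm n on ℛ (i.e., n(R) = √(∑_{(s,a,s')} w(s,a,s')·R(s,a,s')²) for some strictly positive weight function w), there exists a canonicalisation function c that is minimal for n — meaning n(c(R)) ≤ n(R') for every R and every R' that differs from R by potential shaping and S'-redistribution — and this minimal canonicalisation function is unique: any two canonicalisation functions minimal for n are equal. -/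
namespace RewardPaper

/-- A canonicalisation function that is minimal for the norm `n`. -/
def MinimalCanonFor {S A : Type*} [Fintype S] (γ : ℝ) (τ : S → A → S → ℝ)
    (n : Reward S A → ℝ) (c : Reward S A → Reward S A) : Prop :=
  IsCanon γ τ c ∧ ∀ R R' : Reward S A, DifferBy γ τ R R' → n (c R) ≤ n R'

section Aux

variable {S A : Type*} [Fintype S] [Fintype A]

/-- Subspace of potential-shaping differences. -/
def shapeSub (S A : Type*) [Fintype S] (γ : ℝ) : Submodule ℝ (Reward S A) where
  carrier := {R | ∃ Φ : S → ℝ, ∀ s a s', R s a s' = γ * Φ s' - Φ s}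
  add_mem' := by
    rintro x y ⟨Φ, hΦ⟩ ⟨Ψ, hΨ⟩
    exact ⟨fun s => Φ s + Ψ s, fun s a s' => by
      show x s a s' + y s a s' = _
      rw [hΦ s a s', hΨ s a s']; ring⟩
  zero_mem' := ⟨fun _ => 0, fun s a s' => by simp⟩
  smul_mem' := by
    rintro r x ⟨Φ, hΦ⟩
    exact ⟨fun s => r * Φ s, fun s a s' => by
      show r * x s a s' = _
      rw [hΦ s a s']; ring⟩

/-- Subspace of rewards with zero conditional expectation under `τ`. -/
def redistSub (γ : ℝ) (τ : S → A → S → ℝ) : Submodule ℝ (Reward S A) where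
  carrier := {R | ∀ s a, ∑ s', τ s a s' * R s a s' = 0}
  add_mem' := by
    intro x y hx hy s a
    have : ∑ s', τ s a s' * (x s a s' + y s a s')
        = (∑ s', τ s a s' * x s a s') + ∑ s', τ s a s' * y s a s' := by
      rw [← Finset.sum_add_distrib]; exact Finset.sum_congr rfl fun _ _ => by ring
    show ∑ s', τ s a s' * (x s a s' + y s a s') = 0
    rw [this, hx s a, hy s a]; ring
  zero_mem' := by intro s a; simp
  smul_mem' := by
    intro r x hx s a
    have : ∑ s', τ s a s' * (r * x s a s') = r * ∑ s', τ s a s' * x s a s' := by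
      rw [Finset.mul_sum]; exact Finset.sum_congr rfl fun _ _ => by ring
    show ∑ s', τ s a s' * (r * x s a s') = 0
    rw [this, hx s a]; ring

/-- The subspace of all differences generated by potential shaping and
S'-redistribution. -/
def diffSub (γ : ℝ) (τ : S → A → S → ℝ) : Submodule ℝ (Reward S A) :=
  shapeSub S A γ ⊔ redistSub γ τ

lemma differBy_iff (γ : ℝ) (τ : S → A → S → ℝ) (R1 R2 : Reward S A) :
    DifferBy γ τ R1 R2 ↔ R2 - R1 ∈ diffSub γ τ := by
  constructor
  · rintro ⟨R', ⟨Φ, hΦ⟩, hred⟩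
    rw [show R2 - R1 = (R' - R1) + (R2 - R') by ring]
    refine Submodule.add_mem_sup ?_ ?_
    · exact ⟨Φ, fun s a s' => by
        show R' s a s' - R1 s a s' = _
        rw [hΦ s a s']; ring⟩
    · intro s a
      have : ∑ s', τ s a s' * (R2 s a s' - R' s a s')
          = (∑ s', τ s a s' * R2 s a s') - ∑ s', τ s a s' * R' s a s' := by
        rw [← Finset.sum_sub_distrib]; exact Finset.sum_congr rfl fun _ _ => by ring
      show ∑ s', τ s a s' * (R2 s a s' - R' s a s') = 0
      rw [this, ← hred s a]; ring
  · intro h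
    rcases Submodule.mem_sup.mp h with ⟨p, ⟨Φ, hΦ⟩, k, hk, hpk⟩
    refine ⟨R1 + p, ⟨Φ, fun s a s' => by
      show R1 s a s' + p s a s' = _
      rw [hΦ s a s']; ring⟩, ?_⟩
    intro s a
    have hkval : ∀ s a s', k s a s' = R2 s a s' - R1 s a s' - p s a s' := by
      intro s a s'
      have := congrFun (congrFun (congrFun hpk s) a) s'
      show _ = R2 s a s' - R1 s a s' - p s a s'
      simp only [Pi.add_apply, Pi.sub_apply] at this ⊢
      linarith
    have h0 := hk s a
    have hsplit : ∑ s', τ s a s' * k s a s'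
        = (∑ s', τ s a s' * R2 s a s')
          - ∑ s', τ s a s' * (R1 s a s' + p s a s') := by
      rw [← Finset.sum_sub_distrib]
      refine Finset.sum_congr rfl fun s' _ => by rw [hkval s a s']; ring
    rw [hsplit] at h0
    show ∑ s', τ s a s' * (R1 s a s' + p s a s') = ∑ s', τ s a s' * R2 s a s'
    linarith

/-- The weighted embedding of reward space into Euclidean space. -/
noncomputable def psiMap (w : S → A → S → ℝ) (hw : ∀ s a s', 0 < w s a s') :
    Reward S A ≃ₗ[ℝ] EuclideanSpace ℝ (S × A × S) where
  toFun R := WithLp.toLp 2 (fun x : S × A × S => Real.sqrt (w x.1 x.2.1 x.2.2) * R x.1 x.2.1 x.2.2)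
  invFun v := fun s a s' => (Real.sqrt (w s a s'))⁻¹ * v (s, a, s')
  map_add' x y := by
    ext p
    show Real.sqrt _ * (x p.1 p.2.1 p.2.2 + y p.1 p.2.1 p.2.2) = _
    simp only [PiLp.add_apply]
    ring
  map_smul' r x := by
    ext p
    show Real.sqrt _ * (r * x p.1 p.2.1 p.2.2) = _
    simp only [PiLp.smul_apply, smul_eq_mul, RingHom.id_apply]
    ring
  left_inv R := by
    funext s a s'
    exact inv_mul_cancel_left₀ (ne_of_gt (Real.sqrt_pos.mpr (hw s a s'))) _
  right_inv v := by
    ext p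
    exact mul_inv_cancel_left₀ (ne_of_gt (Real.sqrt_pos.mpr (hw p.1 p.2.1 p.2.2))) _

lemma psiMap_norm (w : S → A → S → ℝ) (hw : ∀ s a s', 0 < w s a s')
    (R : Reward S A) : ‖psiMap w hw R‖ = weightedL2 w R := by
  rw [EuclideanSpace.norm_eq, weightedL2]
  congr 1
  rw [Fintype.sum_prod_type]
  refine Finset.sum_congr rfl fun s _ => ?_
  rw [Fintype.sum_prod_type]
  refine Finset.sum_congr rfl fun a _ => Finset.sum_congr rfl fun s' _ => ?_
  show ‖Real.sqrt (w s a s') * R s a s'‖ ^ 2 = _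
  rw [norm_mul, Real.norm_eq_abs, Real.norm_eq_abs, mul_pow, sq_abs, sq_abs,
    Real.sq_sqrt (le_of_lt (hw s a s'))]

end Aux

/-- for any weighted L2-norm there is a unique minimal canonicalisation
function. -/
theorem minimal_canonicalisation_exists_unique
    {S A : Type*} [Fintype S] [Fintype A] [Nonempty S] [Nonempty A]
    (τ : S → A → S → ℝ) (hτ : ∀ s a, IsDist (τ s a))
    (μ0 : S → ℝ) (hμ0 : IsDist μ0)
    (γ : ℝ) (hγ : γ ∈ Set.Ioo (0 : ℝ) 1)
    (hreach : AllReachable τ μ0)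
    (w : S → A → S → ℝ) (hw : ∀ s a s', 0 < w s a s') :
    ∃! c : Reward S A → Reward S A, MinimalCanonFor γ τ (weightedL2 w) c := by
  classical
  set ψ : Reward S A ≃ₗ[ℝ] EuclideanSpace ℝ (S × A × S) := psiMap w hw with hψdef
  set U : Submodule ℝ (Reward S A) := diffSub γ τ with hUdef
  set U' : Submodule ℝ (EuclideanSpace ℝ (S × A × S)) :=
    U.map (ψ : Reward S A →ₗ[ℝ] EuclideanSpace ℝ (S × A × S)) with hU'def
  have hQQ : U'ᗮᗮ = U' := Submodule.orthogonal_orthogonal U'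
  set c : Reward S A → Reward S A :=
    fun R => ψ.symm ((U'ᗮ.orthogonalProjectionOnto (ψ R) : EuclideanSpace ℝ (S × A × S)))
    with hcdef
  -- basic translation lemmas
  have hmemU' : ∀ x y : Reward S A, (ψ x - ψ y ∈ U') ↔ x - y ∈ U := by
    intro x y
    rw [← map_sub]
    constructor
    · intro h
      rcases h with ⟨z, hz, hzeq⟩
      have : z = x - y := ψ.injective hzeq
      rwa [this] at hz
    · intro h; exact ⟨x - y, h, rfl⟩
  have hdiff : ∀ R1 R2 : Reward S A, DifferBy γ τ R1 R2 ↔ ψ R2 - ψ R1 ∈ U' := by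
    intro R1 R2
    rw [differBy_iff, ← hUdef, ← hmemU']
  -- ψ (c R) is the orthogonal projection of ψ R
  have hψc : ∀ R, ψ (c R) = (U'ᗮ.orthogonalProjectionOnto (ψ R) :
      EuclideanSpace ℝ (S × A × S)) := by
    intro R; simp [hcdef]
  have hψcQ : ∀ R, ψ (c R) ∈ U'ᗮ := by
    intro R; rw [hψc]; exact (U'ᗮ.orthogonalProjectionOnto (ψ R)).2
  have hsub : ∀ R, ψ R - ψ (c R) ∈ U' := by
    intro R
    have h := Submodule.sub_starProjection_mem_orthogonal (K := U'ᗮ) (ψ R)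
    rw [hQQ] at h
    rw [hψc R]
    exact h
  -- c R differs from R
  have hdcR : ∀ R, DifferBy γ τ R (c R) := by
    intro R
    rw [hdiff]
    have := U'.neg_mem (hsub R)
    simpa using this
  -- projection equality characterisation
  have hprojeq : ∀ x y : EuclideanSpace ℝ (S × A × S),
      U'ᗮ.orthogonalProjectionOnto x = U'ᗮ.orthogonalProjectionOnto y ↔ x - y ∈ U' := by
    intro x y
    constructor
    · intro h
      have hx : x - (U'ᗮ.orthogonalProjectionOnto x : EuclideanSpace ℝ (S × A × S)) ∈ U'ᗮᗮ := Submodule.sub_starProjection_mem_orthogonal (K := U'ᗮ) x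
      have hy : y - (U'ᗮ.orthogonalProjectionOnto y : EuclideanSpace ℝ (S × A × S)) ∈ U'ᗮᗮ := Submodule.sub_starProjection_mem_orthogonal (K := U'ᗮ) y
      rw [hQQ] at hx hy
      rw [h] at hx
      have hm := U'.sub_mem hx hy
      have heq : (x - (U'ᗮ.orthogonalProjectionOnto y : EuclideanSpace ℝ (S × A × S)))
          - (y - (U'ᗮ.orthogonalProjectionOnto y : EuclideanSpace ℝ (S × A × S))) = x - y := by
        abel
      rwa [heq] at hm
    · intro h
      have hxy : x - y ∈ U'ᗮᗮ := by rw [hQQ]; exact h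
      have h0 : U'ᗮ.orthogonalProjectionOnto (x - y) = 0 :=
        Submodule.orthogonalProjectionOnto_apply_of_mem_orthogonal hxy
      have := map_sub (U'ᗮ.orthogonalProjectionOnto) x y
      rw [h0] at this
      exact (sub_eq_zero.mp this.symm)
  -- Pythagoras helper: if v - ψ (c R) ∈ U' then ‖ψ v‖² = ‖ψ(cR)‖² + ‖diff‖²
  have hpyth : ∀ (R : Reward S A) (v : EuclideanSpace ℝ (S × A × S)),
      v - ψ (c R) ∈ U' →
      ‖v‖ ^ 2 = ‖ψ (c R)‖ ^ 2 + ‖v - ψ (c R)‖ ^ 2 := by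
    intro R v hv
    have hinner : inner ℝ (ψ (c R)) (v - ψ (c R)) = (0 : ℝ) := by
      have := (Submodule.mem_orthogonal U' (ψ (c R))).mp (hψcQ R) _ hv
      rwa [real_inner_comm] at this
    have hdecomp : v = ψ (c R) + (v - ψ (c R)) := by abel
    calc ‖v‖ ^ 2 = ‖ψ (c R) + (v - ψ (c R))‖ ^ 2 := by rw [← hdecomp]
      _ = ‖ψ (c R)‖ ^ 2 + 2 * inner ℝ (ψ (c R)) (v - ψ (c R)) + ‖v - ψ (c R)‖ ^ 2 :=
        norm_add_sq_real _ _
      _ = ‖ψ (c R)‖ ^ 2 + ‖v - ψ (c R)‖ ^ 2 := by rw [hinner]; ring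
  -- minimality of c
  have hmin : ∀ R R' : Reward S A, DifferBy γ τ R R' →
      weightedL2 w (c R) ≤ weightedL2 w R' := by
    intro R R' h
    have h1 : ψ R' - ψ R ∈ U' := (hdiff R R').mp h
    have h2 : ψ R' - ψ (c R) ∈ U' := by
      have hm := U'.add_mem h1 (hsub R)
      have heq : (ψ R' - ψ R) + (ψ R - ψ (c R)) = ψ R' - ψ (c R) := by abel
      rwa [heq] at hm
    have hp := hpyth R (ψ R') h2
    have hle : ‖ψ (c R)‖ ≤ ‖ψ R'‖ := by
      nlinarith [norm_nonneg (ψ (c R)), norm_nonneg (ψ R'),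
        sq_nonneg ‖ψ R' - ψ (c R)‖]
    rwa [psiMap_norm w hw, psiMap_norm w hw] at hle
  have hcanon : MinimalCanonFor γ τ (weightedL2 w) c := by
    refine ⟨⟨?_, hdcR, ?_⟩, hmin⟩
    · constructor
      · intro x y
        simp only [hcdef]
        rw [map_add ψ, map_add (U'ᗮ.orthogonalProjectionOnto), Submodule.coe_add,
          map_add]
      · intro r x
        simp only [hcdef]
        rw [map_smul ψ, map_smul (U'ᗮ.orthogonalProjectionOnto), Submodule.coe_smul,
          map_smul]
    · intro R1 R2
      have : c R1 = c R2 ↔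
          U'ᗮ.orthogonalProjectionOnto (ψ R1) = U'ᗮ.orthogonalProjectionOnto (ψ R2) := by
        constructor
        · intro h
          have := congrArg ψ h
          rw [hψc R1, hψc R2] at this
          exact Subtype.ext this
        · intro h; simp only [hcdef, h]
      rw [this, hprojeq, hdiff]
      constructor
      · intro h; have := U'.neg_mem h; simpa using this
      · intro h; have := U'.neg_mem h; simpa using this
  refine ⟨c, hcanon, ?_⟩
  -- uniqueness
  intro y hy
  funext R
  have hdy : DifferBy γ τ R (y R) := hy.1.2.1 R
  have h1 : ψ (y R) - ψ R ∈ U' := (hdiff R (y R)).mp hdy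
  have h2 : ψ (y R) - ψ (c R) ∈ U' := by
    have hm := U'.add_mem h1 (hsub R)
    have heq : (ψ (y R) - ψ R) + (ψ R - ψ (c R)) = ψ (y R) - ψ (c R) := by abel
    rwa [heq] at hm
  have hp := hpyth R (ψ (y R)) h2
  have hle : weightedL2 w (y R) ≤ weightedL2 w (c R) := hy.2 R (c R) (hdcR R)
  rw [← psiMap_norm w hw, ← psiMap_norm w hw] at hle
  have h0 : ‖ψ (y R) - ψ (c R)‖ = 0 := by
    nlinarith [norm_nonneg (ψ (y R)), norm_nonneg (ψ (c R)),
      norm_nonneg (ψ (y R) - ψ (c R))]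
  have : ψ (y R) = ψ (c R) := by
    have := norm_eq_zero.mp h0
    exact sub_eq_zero.mp this
  exact ψ.injective this

end RewardPaper
end
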